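/- For density matrices ρ and σ on a finite-dimensional Hilbert space with supp ρ ⊆ supp σ, the Umegaki relative entropy satisfies D(ρ‖σ) ≥ −2 log F(ρ,σ), where F(ρ,σ) := Tr|√ρ√σ| is the fidelity. -/

import Mathlib

open scoped Matrix ComplexOrder
variable {n : Type*} [Fintype n] [DecidableEq n]

/-- Apply a real function to a Hermitian matrix via its spectral decomposition. -/
noncomputable def matFun (f : ℝ → ℝ) (A : Matrix n n ℂ) : Matrix n n ℂ :=
  if hA : A.IsHermitian then
    (hA.eigenvectorUnitary : Matrix n n ℂ) *
      Matrix.diagonal (fun i => (f (hA.eigenvalues i) : ℂ)) *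
      (star (hA.eigenvectorUnitary : Matrix n n ℂ))
  else 0

/-- Matrix logarithm. -/
noncomputable def mlog (A : Matrix n n ℂ) : Matrix n n ℂ := matFun Real.log A

/-- Matrix square root. -/
noncomputable def msqrt (A : Matrix n n ℂ) : Matrix n n ℂ := matFun Real.sqrt A

/-- Umegaki relative entropy `D(X‖Y) = Tr[X log X − X log Y]`. -/
noncomputable def relEnt (X Y : Matrix n n ℂ) : ℝ :=
  (Matrix.trace (X * mlog X) - Matrix.trace (X * mlog Y)).re

/-- Quantum fidelity `F(ρ,σ) = Tr|√ρ√σ|`. -/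
noncomputable def fidelity (ρ σ : Matrix n n ℂ) : ℝ :=
  (Matrix.trace (msqrt ((msqrt ρ * msqrt σ)ᴴ * (msqrt ρ * msqrt σ)))).re

/-- Gibbs state `exp(−βH)/Tr exp(−βH)`. -/
noncomputable def gibbs (β : ℝ) (H : Matrix n n ℂ) : Matrix n n ℂ :=
  ((Matrix.trace (matFun Real.exp ((-β) • H))).re)⁻¹ • matFun Real.exp ((-β) • H)

/-- Equilibrium free energy `−β⁻¹ log Tr exp(−βH)`. -/
noncomputable def freeEnergy (β : ℝ) (H : Matrix n n ℂ) : ℝ :=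
  -(β⁻¹ * Real.log ((Matrix.trace (matFun Real.exp ((-β) • H))).re))

/-- A density matrix: positive semidefinite with unit trace. -/
def IsDensity (ρ : Matrix n n ℂ) : Prop := ρ.PosSemidef ∧ ρ.trace = 1

/-- Trace-preserving map. -/
def IsTP (Φ : Matrix n n ℂ → Matrix n n ℂ) : Prop := ∀ X, (Φ X).trace = X.trace

/-- Complete positivity: every ampliation `Φ ⊗ id_m` maps positive semidefinite
matrices to positive semidefinite matrices. -/
def IsCompletelyPositive (Φ : Matrix n n ℂ → Matrix n n ℂ) : Prop :=
  ∀ (m : ℕ) (M : Matrix (n × Fin m) (n × Fin m) ℂ), M.PosSemidef →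
    (Matrix.of fun (p q : n × Fin m) => Φ (Matrix.of fun a b => M (a, p.2) (b, q.2)) p.1 q.1).PosSemidef

/-- CPTP: linear, completely positive, trace-preserving. -/
def IsCPTP (Φ : Matrix n n ℂ → Matrix n n ℂ) : Prop :=
  IsLinearMap ℂ Φ ∧ IsCompletelyPositive Φ ∧ IsTP Φ

/-- `Φd` is the trace-dual (Hilbert–Schmidt adjoint) of `Φ`:
`Tr[Φ(X) Y] = Tr[X Φ†(Y)]` for all `X, Y`. -/
def IsTraceDual (Φ Φd : Matrix n n ℂ → Matrix n n ℂ) : Prop :=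
  ∀ X Y, (Φ X * Y).trace = (X * Φd Y).trace

/-!
Diagonalize `ρ = ∑ pᵢ |aᵢ⟩⟨aᵢ|`, `σ = ∑ qⱼ |bⱼ⟩⟨bⱼ|` and put `cᵢⱼ = |⟨aᵢ|bⱼ⟩|²`, a row-stochastic
matrix. Then `D(ρ‖σ) = ∑ pᵢ cᵢⱼ (log pᵢ - log qⱼ)` and `Re Tr √ρ√σ = ∑ cᵢⱼ √(pᵢ qⱼ)`, so Jensen's
inequality for `exp` with the probability weights `pᵢ cᵢⱼ` gives `exp (-D/2) ≤ Re Tr √ρ√σ`; the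
support hypothesis makes the weight `pᵢ cᵢⱼ` vanish whenever `qⱼ = 0`. Finally `Re Tr X ≤ Tr |X|`.
-/

open Matrix

lemma mul_mul_exp_half_log_sub_log {p q c : ℝ} (hp : 0 ≤ p) (hq : 0 ≤ q)
    (hsupp : q = 0 → p * c = 0) :
    p * c * Real.exp ((Real.log q - Real.log p) / 2) = √p * √q * c := by
  rcases hp.eq_or_lt with rfl | hp
  · simp
  rcases hq.eq_or_lt with rfl | hq
  · simp [hsupp rfl]
  have hexp : Real.exp ((Real.log q - Real.log p) / 2) = √q / √p := by
    rw [← Real.exp_log (div_pos (Real.sqrt_pos.2 hq) (Real.sqrt_pos.2 hp)),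
      Real.log_div (Real.sqrt_pos.2 hq).ne' (Real.sqrt_pos.2 hp).ne', Real.log_sqrt hq.le,
      Real.log_sqrt hp.le, sub_div]
  rw [hexp]
  field_simp
  rw [Real.sq_sqrt hp.le]
  ring

lemma exp_neg_half_sum_mul_log_sub_le_sum_sqrt_mul_sqrt {ι κ : Type*} [Fintype ι] [Fintype κ]
    (p : ι → ℝ) (q : κ → ℝ) (c : ι → κ → ℝ)
    (hp : ∀ i, 0 ≤ p i) (hq : ∀ j, 0 ≤ q j) (hc : ∀ i j, 0 ≤ c i j)
    (hp1 : ∑ i, p i = 1) (hc1 : ∀ i, ∑ j, c i j = 1)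
    (hsupp : ∀ i j, q j = 0 → p i * c i j = 0) :
    Real.exp (-(∑ i, p i * Real.log (p i) - ∑ i, ∑ j, p i * Real.log (q j) * c i j) / 2) ≤
      ∑ i, ∑ j, √(p i) * √(q j) * c i j := by
  set w : ι × κ → ℝ := fun x => p x.1 * c x.1 x.2
  set y : ι × κ → ℝ := fun x => (Real.log (q x.2) - Real.log (p x.1)) / 2
  have hw1 : ∑ x, w x = 1 := by
    simp only [w, Fintype.sum_prod_type, ← Finset.mul_sum, hc1, mul_one, hp1]
  have hjensen := convexOn_exp.map_sum_le (t := Finset.univ)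
    (fun x _ => mul_nonneg (hp x.1) (hc x.1 x.2)) hw1 (fun x _ => Set.mem_univ (y x))
  have hmean : ∑ x, w x • y x =
      -(∑ i, p i * Real.log (p i) - ∑ i, ∑ j, p i * Real.log (q j) * c i j) / 2 := by
    have hrow : ∀ i, ∑ j, w (i, j) • y (i, j) =
        (∑ j, p i * Real.log (q j) * c i j - p i * Real.log (p i) * ∑ j, c i j) / 2 := by
      intro i
      rw [Finset.mul_sum, ← Finset.sum_sub_distrib, Finset.sum_div]
      exact Finset.sum_congr rfl fun j _ => by simp only [w, y, smul_eq_mul]; ring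
    simp only [Fintype.sum_prod_type, hrow, hc1, mul_one, ← Finset.sum_div,
      Finset.sum_sub_distrib]
    ring
  have hvalue : ∑ x, w x • Real.exp (y x) = ∑ i, ∑ j, √(p i) * √(q j) * c i j := by
    simp only [Fintype.sum_prod_type, w, y, smul_eq_mul]
    exact Finset.sum_congr rfl fun i _ => Finset.sum_congr rfl fun j _ =>
      mul_mul_exp_half_log_sub_log (hp i) (hq j) (hsupp i j)
  rwa [hmean, hvalue] at hjensen

section SpectralCalculus

variable {A B : Matrix n n ℂ}

lemma matFun_of_isHermitian (hA : A.IsHermitian) (f : ℝ → ℝ) :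
    matFun f A = (hA.eigenvectorUnitary : Matrix n n ℂ) *
      diagonal (fun i => (f (hA.eigenvalues i) : ℂ)) *
        star (hA.eigenvectorUnitary : Matrix n n ℂ) :=
  dif_pos hA

lemma matFun_id_of_isHermitian (hA : A.IsHermitian) : matFun id A = A := by
  rw [matFun_of_isHermitian hA]
  conv_rhs => rw [hA.spectral_theorem, Unitary.conjStarAlgAut_apply]
  rfl

lemma trace_matFun (hA : A.IsHermitian) (f : ℝ → ℝ) :
    (matFun f A).trace = ∑ i, (f (hA.eigenvalues i) : ℂ) := by
  rw [matFun_of_isHermitian hA, trace_mul_cycle, Unitary.coe_star_mul_self, one_mul,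
    trace_diagonal]

noncomputable def overlap (hA : A.IsHermitian) (hB : B.IsHermitian) (i j : n) : ℝ :=
  ‖inner ℂ (hA.eigenvectorBasis i) (hB.eigenvectorBasis j)‖ ^ 2

lemma star_eigenvectorUnitary_mul_eigenvectorUnitary_apply (hA : A.IsHermitian)
    (hB : B.IsHermitian) (i j : n) :
    (star (hA.eigenvectorUnitary : Matrix n n ℂ) * hB.eigenvectorUnitary) i j =
      inner ℂ (hA.eigenvectorBasis i) (hB.eigenvectorBasis j) := by
  simp [mul_apply, EuclideanSpace.inner_eq_star_dotProduct, dotProduct, mul_comm]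

lemma re_trace_diagonal_mul_mul_diagonal_mul_conjTranspose (M : Matrix n n ℂ) (a b : n → ℝ) :
    (diagonal (fun i => (a i : ℂ)) * M * diagonal (fun j => (b j : ℂ)) * Mᴴ).trace.re =
      ∑ i, ∑ j, a i * b j * ‖M i j‖ ^ 2 := by
  simp only [trace, diag_apply, mul_apply (N := Mᴴ), mul_diagonal, diagonal_mul,
    conjTranspose_apply, Complex.re_sum]
  refine Finset.sum_congr rfl fun i _ => Finset.sum_congr rfl fun j _ => ?_
  rw [show (a i : ℂ) * M i j * b j * star (M i j) = a i * b j * (M i j * star (M i j)) by ring,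
    Complex.star_def, Complex.mul_conj']
  norm_cast

lemma trace_conj_diagonal_mul_conj_diagonal (U V : Matrix n n ℂ) (a b : n → ℂ) :
    (U * diagonal a * star U * (V * diagonal b * star V)).trace =
      (diagonal a * (star U * V) * diagonal b * (star U * V)ᴴ).trace := by
  simp only [conjTranspose_mul, star_eq_conjTranspose, conjTranspose_conjTranspose,
    Matrix.mul_assoc]
  rw [trace_mul_comm]
  simp only [Matrix.mul_assoc]

lemma re_trace_matFun_mul_matFun (hA : A.IsHermitian) (hB : B.IsHermitian) (f g : ℝ → ℝ) :
    (matFun f A * matFun g B).trace.re =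
      ∑ i, ∑ j, f (hA.eigenvalues i) * g (hB.eigenvalues j) * overlap hA hB i j := by
  rw [matFun_of_isHermitian hA, matFun_of_isHermitian hB, trace_conj_diagonal_mul_conj_diagonal,
    re_trace_diagonal_mul_mul_diagonal_mul_conjTranspose]
  simp only [star_eigenvectorUnitary_mul_eigenvectorUnitary_apply, overlap]

lemma overlap_nonneg (hA : A.IsHermitian) (hB : B.IsHermitian) (i j : n) :
    0 ≤ overlap hA hB i j := by
  unfold overlap; positivity

lemma overlap_self (hA : A.IsHermitian) (i j : n) :
    overlap hA hA i j = if i = j then 1 else 0 := by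
  unfold overlap
  rw [orthonormal_iff_ite.mp hA.eigenvectorBasis.orthonormal i j]
  split_ifs <;> simp

lemma sum_overlap_right (hA : A.IsHermitian) (hB : B.IsHermitian) (i : n) :
    ∑ j, overlap hA hB i j = 1 := by
  unfold overlap
  rw [hB.eigenvectorBasis.sum_sq_norm_inner_left, hA.eigenvectorBasis.orthonormal.1 i,
    one_pow]

lemma eigenvalues_mul_overlap_eq_zero (hA : A.IsHermitian) (hB : B.IsHermitian)
    (hker : ∀ x, B *ᵥ x = 0 → A *ᵥ x = 0) (i : n) {j : n} (hj : hB.eigenvalues j = 0) :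
    hA.eigenvalues i * overlap hA hB i j = 0 := by
  have hAb : A *ᵥ ⇑(hB.eigenvectorBasis j) = 0 :=
    hker _ (by rw [hB.mulVec_eigenvectorBasis, hj, zero_smul])
  have hinner :
      (hA.eigenvalues i : ℂ) * inner ℂ (hA.eigenvectorBasis i) (hB.eigenvectorBasis j) = 0 :=
    calc _ = star (A *ᵥ ⇑(hA.eigenvectorBasis i)) ⬝ᵥ ⇑(hB.eigenvectorBasis j) := by
          rw [hA.mulVec_eigenvectorBasis, EuclideanSpace.inner_eq_star_dotProduct,
            dotProduct_comm]
          simp [star_smul, smul_dotProduct]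
      _ = 0 := by rw [star_mulVec, ← dotProduct_mulVec, hA.eq, hAb, dotProduct_zero]
  unfold overlap
  rcases mul_eq_zero.1 hinner with h | h
  · simp [Complex.ofReal_eq_zero.1 h]
  · simp [h]

lemma relEnt_eq_sum (hA : A.IsHermitian) (hB : B.IsHermitian) :
    relEnt A B = ∑ i, hA.eigenvalues i * Real.log (hA.eigenvalues i) -
      ∑ i, ∑ j, hA.eigenvalues i * Real.log (hB.eigenvalues j) * overlap hA hB i j := by
  have hAA := re_trace_matFun_mul_matFun hA hA id Real.log
  have hAB := re_trace_matFun_mul_matFun hA hB id Real.log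
  rw [matFun_id_of_isHermitian hA] at hAA hAB
  simp only [overlap_self, mul_ite, mul_one, mul_zero, Finset.sum_ite_eq, Finset.mem_univ,
    if_true, id] at hAA
  rw [relEnt, Complex.sub_re]
  exact congrArg₂ _ hAA hAB

end SpectralCalculus

lemma re_trace_le_sum_sqrt_of_conjTranspose_mul_self_eq_diagonal (M : Matrix n n ℂ) (d : n → ℝ)
    (hM : Mᴴ * M = diagonal (fun j => (d j : ℂ))) :
    M.trace.re ≤ ∑ j, √(d j) := by
  have hcol : ∀ j, ∑ i, ‖M i j‖ ^ 2 = d j := by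
    intro j
    have h := congrFun (congrFun hM j) j
    rw [mul_apply, diagonal_apply_eq] at h
    have hC : ((∑ i, ‖M i j‖ ^ 2 : ℝ) : ℂ) = d j := by
      rw [← h]
      push_cast
      exact Finset.sum_congr rfl fun i _ => by
        rw [conjTranspose_apply, Complex.star_def, mul_comm, Complex.mul_conj']
    exact_mod_cast hC
  rw [trace, Complex.re_sum]
  refine Finset.sum_le_sum fun j _ => ?_
  calc (M j j).re ≤ ‖M j j‖ := Complex.re_le_norm _
    _ = √(‖M j j‖ ^ 2) := (Real.sqrt_sq (norm_nonneg _)).symm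
    _ ≤ √(d j) := Real.sqrt_le_sqrt <| hcol j ▸
        Finset.single_le_sum (f := fun i => ‖M i j‖ ^ 2) (fun i _ => by positivity)
          (Finset.mem_univ j)

lemma re_trace_le_re_trace_msqrt_conjTranspose_mul_self (M : Matrix n n ℂ) :
    M.trace.re ≤ (msqrt (Mᴴ * M)).trace.re := by
  have hH : (Mᴴ * M).IsHermitian := isHermitian_conjTranspose_mul_self M
  set W : Matrix n n ℂ := (hH.eigenvectorUnitary : Matrix n n ℂ)
  have hW : W * star W = 1 := Unitary.coe_mul_star_self _
  have hdiag : (star W * M * W)ᴴ * (star W * M * W) =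
      diagonal (fun j => (hH.eigenvalues j : ℂ)) := by
    have h : star W * (Mᴴ * M) * W = diagonal (fun j => (hH.eigenvalues j : ℂ)) := by
      have h := hH.conjStarAlgAut_star_eigenvectorUnitary
      rwa [Unitary.conjStarAlgAut_apply, Unitary.coe_star, star_star] at h
    rw [← h]
    simp only [← star_eq_conjTranspose, star_mul, star_star, Matrix.mul_assoc]
    rw [← Matrix.mul_assoc W (star W), hW, Matrix.one_mul]
  have htrace : (star W * M * W).trace = M.trace := by
    rw [trace_mul_cycle, hW, Matrix.one_mul]
  rw [msqrt, trace_matFun hH, Complex.re_sum, ← htrace]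
  exact re_trace_le_sum_sqrt_of_conjTranspose_mul_self_eq_diagonal _ _ hdiag

/-- for density matrices with `supp ρ ⊆ supp σ`,
`D(ρ‖σ) ≥ −2 log F(ρ,σ)`. -/
theorem stmt19_relEnt_ge_fidelity (ρ σ : Matrix n n ℂ)
    (hρ : IsDensity ρ) (hσ : IsDensity σ)
    (hsupp : ∀ x : n → ℂ, σ.mulVec x = 0 → ρ.mulVec x = 0) :
    relEnt ρ σ ≥ -2 * Real.log (fidelity ρ σ) := by
  obtain ⟨hρpsd, hρ1⟩ := hρ
  have hσpsd := hσ.1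
  have hρH := hρpsd.1
  have hσH := hσpsd.1
  have hp1 : ∑ i, hρH.eigenvalues i = 1 := by
    simpa using congrArg Complex.re (hρH.trace_eq_sum_eigenvalues.symm.trans hρ1)
  have hbound : Real.exp (-relEnt ρ σ / 2) ≤ fidelity ρ σ := by
    have h := exp_neg_half_sum_mul_log_sub_le_sum_sqrt_mul_sqrt _ _ _
      hρpsd.eigenvalues_nonneg hσpsd.eigenvalues_nonneg (overlap_nonneg hρH hσH) hp1
      (sum_overlap_right hρH hσH) (fun i _ hj => eigenvalues_mul_overlap_eq_zero hρH hσH hsupp i hj)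
    rw [← relEnt_eq_sum, ← re_trace_matFun_mul_matFun hρH hσH Real.sqrt Real.sqrt] at h
    exact h.trans (re_trace_le_re_trace_msqrt_conjTranspose_mul_self _)
  have hlog := (Real.le_log_iff_exp_le ((Real.exp_pos _).trans_le hbound)).2 hbound
  linarith
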